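/- arXiv:2409.00581 — 3 statements merged into one kernel-verified Lean document; each statement's English description precedes it below -/
import Mathlib

section
/- Let n, k be natural numbers with k ≥ 1 and let H₁, H₂ be real n×k matrices with orthonormal columns (H₁ᵀH₁ = I_k and H₂ᵀH₂ = I_k). Suppose H₁ᵀH₂ = U·D·Vᵀ is a singular value decomposition: U and V are k×k orthogonal matrices (UᵀU = UUᵀ = I_k, VᵀV = VVᵀ = I_k) and D is diagonal with nonnegative nonincreasing diagonal entries s₁ ≥ s₂ ≥ ⋯ ≥ s_k ≥ 0. Let W₁ and W₂ be the subspaces of Euclidean space ℝ^n spanned by the columns of H₁ and H₂ respectively. Then for every index m ∈ {1, …, k}, the value s_m = D_{mm} is the greatest element (a maximum, attained) of the set { ⟨x, y⟩ : x ∈ W₁, y ∈ W₂, ‖x‖ = 1, ‖y‖ = 1, and for all j < m, ⟨x, (H₁U)_j⟩ = 0 and ⟨y, (H₂V)_j⟩ = 0 }, where (H₁U)_j and (H₂V)_j denote the j-th columns of H₁U and H₂V. In particular, the cosines of the principal angles between W₁ and W₂ are the singular values of H₁ᵀH₂, attained at the principal vectors given by the columns of H₁U and H₂V. -/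
open scoped RealInnerProductSpace
open Matrix

/-!
Put `P = H₁U` and `Q = H₂V`. Since `U`, `V` are orthogonal, `P`, `Q` still have orthonormal
columns, span `W₁`, `W₂`, and `PᵀQ = D`. As `P`, `Q` are isometries `ℝᵏ → ℝⁿ`, writing `x = Pa`,
`y = Qb` turns the constraints into `‖a‖ = ‖b‖ = 1` and `aⱼ = bⱼ = 0` for `j < m`, and `⟪x, y⟫`
into `∑ aⱼ Dⱼⱼ bⱼ ≤ ∑ Dₘₘ (aⱼ² + bⱼ²) / 2 = Dₘₘ`, with equality at `a = b = e_m`.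
-/

namespace Matrix

variable {ι κ : Type*} [Fintype κ] [DecidableEq κ]

theorem span_range_toLp_col_eq_range_toEuclideanLin (A : Matrix ι κ ℝ) :
    Submodule.span ℝ (Set.range fun j => (WithLp.toLp 2 (fun i => A i j) : EuclideanSpace ℝ ι)) =
      LinearMap.range A.toEuclideanLin := by
  rw [LinearMap.range_eq_map, ← (EuclideanSpace.basisFun κ ℝ).toBasis.span_eq, Submodule.map_span,
    ← Set.range_comp]
  refine congrArg (Submodule.span ℝ ∘ Set.range) (funext fun j => ?_)
  ext i
  simp

theorem range_toEuclideanLin_mul_of_mul_eq_one {A B : Matrix κ κ ℝ} (h : A * B = 1)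
    (H : Matrix ι κ ℝ) :
    LinearMap.range (H * A).toEuclideanLin = LinearMap.range H.toEuclideanLin := by
  rw [toLpLin_mul_same, LinearMap.range_comp_of_range_eq_top]
  refine LinearMap.range_eq_top.mpr fun x => ⟨B.toEuclideanLin x, ?_⟩
  rw [← LinearMap.comp_apply, ← toLpLin_mul_same, h, toLpLin_one, LinearMap.id_apply]

variable [Fintype ι]

theorem inner_toEuclideanLin_toEuclideanLin (A B : Matrix ι κ ℝ) (x y : EuclideanSpace ℝ κ) :
    ⟪A.toEuclideanLin x, B.toEuclideanLin y⟫ = ⟪x, (Aᵀ * B).toEuclideanLin y⟫ := by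
  classical
  rw [toLpLin_mul_same, LinearMap.comp_apply, ← conjTranspose_eq_transpose_of_trivial,
    toEuclideanLin_conjTranspose_eq_adjoint, LinearMap.adjoint_inner_right]

theorem inner_toEuclideanLin_of_transpose_mul_self {A : Matrix ι κ ℝ} (hA : Aᵀ * A = 1)
    (x y : EuclideanSpace ℝ κ) : ⟪A.toEuclideanLin x, A.toEuclideanLin y⟫ = ⟪x, y⟫ := by
  rw [inner_toEuclideanLin_toEuclideanLin, hA, toLpLin_one, LinearMap.id_apply]

theorem norm_toEuclideanLin_of_transpose_mul_self {A : Matrix ι κ ℝ} (hA : Aᵀ * A = 1)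
    (x : EuclideanSpace ℝ κ) : ‖A.toEuclideanLin x‖ = ‖x‖ :=
  (A.toEuclideanLin.isometryOfInner (inner_toEuclideanLin_of_transpose_mul_self hA)).norm_map x

theorem inner_toEuclideanLin_toLp_col {A : Matrix ι κ ℝ} (hA : Aᵀ * A = 1)
    (x : EuclideanSpace ℝ κ) (j : κ) :
    ⟪A.toEuclideanLin x, WithLp.toLp 2 (fun i => A i j)⟫ = x j := by
  have : (WithLp.toLp 2 (fun i => A i j) : EuclideanSpace ℝ ι) =
      A.toEuclideanLin (EuclideanSpace.single j 1) := by
    ext i; simp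
  rw [this, inner_toEuclideanLin_of_transpose_mul_self hA, EuclideanSpace.inner_single_right]
  simp

theorem inner_toEuclideanLin_diagonal (d : κ → ℝ) (x y : EuclideanSpace ℝ κ) :
    ⟪x, (diagonal d).toEuclideanLin y⟫ = ∑ j, x j * d j * y j := by
  simp only [PiLp.inner_apply, toLpLin_apply, mulVec_diagonal, Real.inner_apply]
  exact Finset.sum_congr rfl fun j _ => by ring

theorem transpose_mul_self_mul_eq_one {H : Matrix ι κ ℝ} {U : Matrix κ κ ℝ}
    (hH : Hᵀ * H = 1) (hU : Uᵀ * U = 1) : (H * U)ᵀ * (H * U) = 1 := by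
  rw [transpose_mul, Matrix.mul_assoc, ← Matrix.mul_assoc Hᵀ, hH, Matrix.one_mul, hU]

end Matrix

theorem isGreatest_sum_mul_mul_of_antitone {κ : Type*} [Fintype κ] [LinearOrder κ] {d : κ → ℝ}
    (hd₀ : ∀ j, 0 ≤ d j) (hd : Antitone d) (m : κ) :
    IsGreatest {r | ∃ a b : EuclideanSpace ℝ κ, ‖a‖ = 1 ∧ ‖b‖ = 1 ∧
      (∀ j, j < m → a j = 0 ∧ b j = 0) ∧ r = ∑ j, a j * d j * b j} (d m) := by
  constructor
  · refine ⟨EuclideanSpace.single m 1, EuclideanSpace.single m 1, by simp, by simp,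
      fun j hj => by simp [hj.ne], by simp⟩
  · rintro _ ⟨a, b, ha, hb, hab, rfl⟩
    have hterm : ∀ j, a j * d j * b j ≤ d m * ((a j ^ 2 + b j ^ 2) / 2) := by
      intro j
      rcases lt_or_ge j m with hjm | hmj
      · rw [(hab j hjm).1]
        nlinarith [hd₀ m, sq_nonneg (b j)]
      · nlinarith [hd₀ j, hd hmj, sq_nonneg (a j - b j), sq_nonneg (a j), sq_nonneg (b j)]
    have hsq : ∀ c : EuclideanSpace ℝ κ, ‖c‖ = 1 → ∑ j, c j ^ 2 = 1 := fun c hc => by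
      rw [← EuclideanSpace.real_norm_sq_eq, hc, one_pow]
    calc ∑ j, a j * d j * b j ≤ ∑ j, d m * ((a j ^ 2 + b j ^ 2) / 2) :=
          Finset.sum_le_sum fun j _ => hterm j
      _ = d m * ((∑ j, a j ^ 2 + ∑ j, b j ^ 2) / 2) := by
          rw [← Finset.mul_sum, ← Finset.sum_div, Finset.sum_add_distrib]
      _ = d m := by rw [hsq a ha, hsq b hb]; ring

theorem isGreatest_inner_of_transpose_mul_eq_diagonal {ι κ : Type*} [Fintype ι] [Fintype κ]
    [LinearOrder κ] {P Q : Matrix ι κ ℝ} (hP : Pᵀ * P = 1) (hQ : Qᵀ * Q = 1) {d : κ → ℝ}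
    (hPQ : Pᵀ * Q = diagonal d) (hd₀ : ∀ j, 0 ≤ d j) (hd : Antitone d) (m : κ) :
    IsGreatest {r | ∃ x y : EuclideanSpace ℝ ι,
      x ∈ LinearMap.range P.toEuclideanLin ∧ y ∈ LinearMap.range Q.toEuclideanLin ∧
      ‖x‖ = 1 ∧ ‖y‖ = 1 ∧
      (∀ j, j < m → ⟪x, WithLp.toLp 2 (fun i => P i j)⟫ = 0 ∧
        ⟪y, WithLp.toLp 2 (fun i => Q i j)⟫ = 0) ∧
      r = ⟪x, y⟫} (d m) := by
  convert isGreatest_sum_mul_mul_of_antitone hd₀ hd m using 1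
  ext r
  simp only [Set.mem_ofPred_eq, LinearMap.mem_range, exists_and_left, exists_exists_eq_and,
    norm_toEuclideanLin_of_transpose_mul_self hP, norm_toEuclideanLin_of_transpose_mul_self hQ,
    inner_toEuclideanLin_toLp_col hP, inner_toEuclideanLin_toLp_col hQ,
    inner_toEuclideanLin_toEuclideanLin, hPQ, inner_toEuclideanLin_diagonal]

theorem principal_angles_via_svd_general (n k : ℕ)
    (H₁ H₂ : Matrix (Fin n) (Fin k) ℝ)
    (hH₁ : H₁ᵀ * H₁ = 1) (hH₂ : H₂ᵀ * H₂ = 1)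
    (U D V : Matrix (Fin k) (Fin k) ℝ)
    (hU : Uᵀ * U = 1) (hU' : U * Uᵀ = 1)
    (hV : Vᵀ * V = 1) (hV' : V * Vᵀ = 1)
    (hD : ∀ i j : Fin k, i ≠ j → D i j = 0)
    (hDnonneg : ∀ i : Fin k, 0 ≤ D i i)
    (hDmono : ∀ i j : Fin k, i ≤ j → D j j ≤ D i i)
    (hSVD : H₁ᵀ * H₂ = U * D * Vᵀ)
    (W₁ W₂ : Submodule ℝ (EuclideanSpace ℝ (Fin n)))
    (hW₁ : W₁ = Submodule.span ℝ (Set.range fun j : Fin k =>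
      (WithLp.toLp 2 (fun i : Fin n => H₁ i j) : EuclideanSpace ℝ (Fin n))))
    (hW₂ : W₂ = Submodule.span ℝ (Set.range fun j : Fin k =>
      (WithLp.toLp 2 (fun i : Fin n => H₂ i j) : EuclideanSpace ℝ (Fin n))))
    (m : Fin k) :
    IsGreatest
      {r : ℝ | ∃ x y : EuclideanSpace ℝ (Fin n),
        x ∈ W₁ ∧ y ∈ W₂ ∧ ‖x‖ = 1 ∧ ‖y‖ = 1 ∧
        (∀ j : Fin k, j < m →
          ⟪x, (WithLp.toLp 2 (fun i : Fin n => (H₁ * U) i j) : EuclideanSpace ℝ (Fin n))⟫ = 0 ∧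
          ⟪y, (WithLp.toLp 2 (fun i : Fin n => (H₂ * V) i j) : EuclideanSpace ℝ (Fin n))⟫ = 0) ∧
        r = ⟪x, y⟫}
      (D m m) := by
  have hPQ : (H₁ * U)ᵀ * (H₂ * V) = diagonal fun i => D i i := by
    rw [transpose_mul, Matrix.mul_assoc, ← Matrix.mul_assoc H₁ᵀ, hSVD]
    simp only [Matrix.mul_assoc]
    rw [hV, Matrix.mul_one, ← Matrix.mul_assoc, hU, Matrix.one_mul]
    exact (show D.IsDiag from hD).diagonal_diag.symm
  subst hW₁ hW₂
  rw [span_range_toLp_col_eq_range_toEuclideanLin, span_range_toLp_col_eq_range_toEuclideanLin,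
    ← range_toEuclideanLin_mul_of_mul_eq_one hU' H₁, ← range_toEuclideanLin_mul_of_mul_eq_one hV' H₂]
  exact isGreatest_inner_of_transpose_mul_eq_diagonal (transpose_mul_self_mul_eq_one hH₁ hU)
    (transpose_mul_self_mul_eq_one hH₂ hV) hPQ hDnonneg hDmono m

/-- The cosines of the principal angles between the column spans `W₁`, `W₂` of two
matrices `H₁`, `H₂` with orthonormal columns are the singular values of `H₁ᵀH₂`:
for each `m`, the `m`-th singular value `D m m` is the maximum of `⟪x, y⟫` over unit
vectors `x ∈ W₁`, `y ∈ W₂` orthogonal to the previous principal vectors, which are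
the columns of `H₁U` and `H₂V`. -/
theorem principal_angles_via_svd (n k : ℕ) (hk : 1 ≤ k)
    (H₁ H₂ : Matrix (Fin n) (Fin k) ℝ)
    (hH₁ : H₁ᵀ * H₁ = 1) (hH₂ : H₂ᵀ * H₂ = 1)
    (U D V : Matrix (Fin k) (Fin k) ℝ)
    (hU : Uᵀ * U = 1) (hU' : U * Uᵀ = 1)
    (hV : Vᵀ * V = 1) (hV' : V * Vᵀ = 1)
    (hD : ∀ i j : Fin k, i ≠ j → D i j = 0)
    (hDnonneg : ∀ i : Fin k, 0 ≤ D i i)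
    (hDmono : ∀ i j : Fin k, i ≤ j → D j j ≤ D i i)
    (hSVD : H₁ᵀ * H₂ = U * D * Vᵀ)
    (W₁ W₂ : Submodule ℝ (EuclideanSpace ℝ (Fin n)))
    (hW₁ : W₁ = Submodule.span ℝ (Set.range fun j : Fin k =>
      (WithLp.toLp 2 (fun i : Fin n => H₁ i j) : EuclideanSpace ℝ (Fin n))))
    (hW₂ : W₂ = Submodule.span ℝ (Set.range fun j : Fin k =>
      (WithLp.toLp 2 (fun i : Fin n => H₂ i j) : EuclideanSpace ℝ (Fin n))))
    (m : Fin k) :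
    IsGreatest
      {r : ℝ | ∃ x y : EuclideanSpace ℝ (Fin n),
        x ∈ W₁ ∧ y ∈ W₂ ∧ ‖x‖ = 1 ∧ ‖y‖ = 1 ∧
        (∀ j : Fin k, j < m →
          ⟪x, (WithLp.toLp 2 (fun i : Fin n => (H₁ * U) i j) : EuclideanSpace ℝ (Fin n))⟫ = 0 ∧
          ⟪y, (WithLp.toLp 2 (fun i : Fin n => (H₂ * V) i j) : EuclideanSpace ℝ (Fin n))⟫ = 0) ∧
        r = ⟪x, y⟫}
      (D m m) :=
  principal_angles_via_svd_general n k H₁ H₂ hH₁ hH₂ U D V hU hU' hV hV' hD hDnonneg hDmono hSVD W₁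
    W₂ hW₁ hW₂ m
end

section
/- Let n, k be natural numbers, let H₁, H₂ be real n×k matrices with orthonormal columns (H₁ᵀH₁ = I_k and H₂ᵀH₂ = I_k), and suppose H₁ᵀH₂ = U·D·Vᵀ where U, D, V are k×k real matrices with UᵀU = I_k and VᵀV = I_k. Let W₁ be the subspace of Euclidean space ℝ^n spanned by the columns of H₁, with orthogonal projection P_{W₁}. Let w₁_off, w₂_off ∈ ℝ^n be offset vectors, let ḡ ∈ ℝ^k, and let the desired admissible trajectory of the guest system be w_g = (H₂V)·ḡ + w₂_off. Define w_h = (H₁UD)·ḡ + P_{W₁}(w₂_off − w₁_off) + w₁_off. Then w_h belongs to the host admissible behavior B₁ = w₁_off + W₁, and w_h minimizes the distance to w_g over B₁: for every z ∈ w₁_off + W₁, ‖w_g − w_h‖ ≤ ‖w_g − z‖. That is, w_h is the orthogonal projection of w_g onto B₁. -/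
/-!
The residual `w_g - w_h` is `(H₂V - H₁UD)ḡ` plus the residual of projecting `w₂_off - w₁_off`
onto `W₁`. The first summand is orthogonal to `W₁` because `H₁ᵀH₂V = UD = H₁ᵀH₁UD`, the second
by definition of the orthogonal projection. A point of the affine subspace `w₁_off + W₁` whose
residual is orthogonal to `W₁` is nearest to `w_g` by Pythagoras.
-/

open Matrix Pointwise

lemma Matrix.toLp_mulVec_mem_span_cols {m n : Type*} [Fintype n] (A : Matrix m n ℝ)
    (x : n → ℝ) :
    WithLp.toLp 2 (A *ᵥ x) ∈ Submodule.span ℝ (Set.range fun j : n =>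
      (WithLp.toLp 2 (fun i : m => A i j) : EuclideanSpace ℝ m)) := by
  have hsum : (WithLp.toLp 2 (A *ᵥ x) : EuclideanSpace ℝ m) =
      ∑ j, x j • (WithLp.toLp 2 (fun i : m => A i j) : EuclideanSpace ℝ m) := by
    ext i
    simp [Matrix.mulVec, dotProduct, mul_comm]
  rw [hsum]
  exact Submodule.sum_mem _ fun j _ => Submodule.smul_mem _ _ (Submodule.subset_span ⟨j, rfl⟩)

lemma Matrix.toLp_mem_orthogonal_span_cols {m n : Type*} [Fintype m] {A : Matrix m n ℝ}
    {y : m → ℝ} (hy : Aᵀ *ᵥ y = 0) :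
    (WithLp.toLp 2 y : EuclideanSpace ℝ m) ∈ (Submodule.span ℝ (Set.range fun j : n =>
      (WithLp.toLp 2 (fun i : m => A i j) : EuclideanSpace ℝ m)))ᗮ := by
  have hortho : Submodule.span ℝ {(WithLp.toLp 2 y : EuclideanSpace ℝ m)} ⟂
      Submodule.span ℝ (Set.range fun j : n =>
        (WithLp.toLp 2 (fun i : m => A i j) : EuclideanSpace ℝ m)) := by
    rw [Submodule.isOrtho_span]
    rintro _ rfl _ ⟨j, rfl⟩
    simpa [PiLp.inner_apply, Matrix.mulVec, dotProduct, mul_comm] using congrFun hy j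
  exact hortho.le (Submodule.mem_span_singleton_self _)

lemma Matrix.transpose_mul_sub_eq_zero_of_transpose_mul_eq {m n R : Type*} [Fintype m]
    [Fintype n] [DecidableEq n] [Ring R] {H₁ H₂ : Matrix m n R} {U D V : Matrix n n R}
    (hH₁ : H₁ᵀ * H₁ = 1) (hV : Vᵀ * V = 1) (hSVD : H₁ᵀ * H₂ = U * D * Vᵀ) :
    H₁ᵀ * (H₂ * V - H₁ * U * D) = 0 := by
  rw [Matrix.mul_sub, ← Matrix.mul_assoc, hSVD, Matrix.mul_assoc _ Vᵀ, hV, Matrix.mul_assoc H₁,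
    ← Matrix.mul_assoc H₁ᵀ, hH₁, Matrix.mul_one, Matrix.one_mul, sub_self]

lemma norm_sub_le_norm_sub_of_mem_vadd_of_sub_mem_orthogonal {E : Type*}
    [NormedAddCommGroup E] [InnerProductSpace ℝ E] {K : Submodule ℝ E} {o p w z : E}
    (hp : p ∈ o +ᵥ (K : Set E)) (hwp : w - p ∈ Kᗮ) (hz : z ∈ o +ᵥ (K : Set E)) :
    ‖w - p‖ ≤ ‖w - z‖ := by
  rw [Set.mem_vadd_set_iff_neg_vadd_mem, vadd_eq_add, SetLike.mem_coe] at hp hz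
  have hpz : p - z ∈ K := by
    simpa [sub_eq_neg_add, add_assoc] using K.sub_mem hp hz
  have hpyth := norm_add_sq_eq_norm_sq_add_norm_sq_real (K.inner_left_of_mem_orthogonal hpz hwp)
  rw [sub_add_sub_cancel] at hpyth
  nlinarith [norm_nonneg (w - p), norm_nonneg (w - z), mul_self_nonneg ‖p - z‖]

theorem similarity_based_learning_general (n k : ℕ)
    (H₁ H₂ : Matrix (Fin n) (Fin k) ℝ)
    (hH₁ : H₁ᵀ * H₁ = 1)
    (U D V : Matrix (Fin k) (Fin k) ℝ)
    (hV : Vᵀ * V = 1)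
    (hSVD : H₁ᵀ * H₂ = U * D * Vᵀ)
    (W₁ : Submodule ℝ (EuclideanSpace ℝ (Fin n)))
    (hW₁ : W₁ = Submodule.span ℝ (Set.range fun j : Fin k =>
      (WithLp.toLp 2 (fun i : Fin n => H₁ i j) : EuclideanSpace ℝ (Fin n))))
    (w₁off w₂off : EuclideanSpace ℝ (Fin n)) (gbar : Fin k → ℝ)
    (w_g w_h : EuclideanSpace ℝ (Fin n))
    (hwg : w_g = (show EuclideanSpace ℝ (Fin n) from WithLp.toLp 2 ((H₂ * V).mulVec gbar)) + w₂off)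
    (hwh : w_h = (show EuclideanSpace ℝ (Fin n) from WithLp.toLp 2 ((H₁ * U * D).mulVec gbar)) +
      (Submodule.orthogonalProjectionOnto W₁ (w₂off - w₁off) : EuclideanSpace ℝ (Fin n)) + w₁off) :
    w_h ∈ (w₁off +ᵥ (W₁ : Set (EuclideanSpace ℝ (Fin n)))) ∧
      ∀ z ∈ w₁off +ᵥ (W₁ : Set (EuclideanSpace ℝ (Fin n))),
        ‖w_g - w_h‖ ≤ ‖w_g - z‖ := by
  set P := (Submodule.orthogonalProjectionOnto W₁ (w₂off - w₁off) : EuclideanSpace ℝ (Fin n))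
  have hmem : w_h ∈ w₁off +ᵥ (W₁ : Set (EuclideanSpace ℝ (Fin n))) := by
    rw [Set.mem_vadd_set_iff_neg_vadd_mem, vadd_eq_add, hwh, neg_add_eq_sub, add_sub_cancel_right]
    refine W₁.add_mem ?_ (Submodule.coe_mem _)
    rw [Matrix.mul_assoc, ← Matrix.mulVec_mulVec, hW₁]
    exact H₁.toLp_mulVec_mem_span_cols _
  have hsplit : w_g - w_h = WithLp.toLp 2 ((H₂ * V - H₁ * U * D) *ᵥ gbar) +
      ((w₂off - w₁off) - P) := by
    rw [hwg, hwh, Matrix.sub_mulVec, WithLp.toLp_sub]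
    abel
  have horth : w_g - w_h ∈ W₁ᗮ := by
    rw [hsplit]
    refine W₁ᗮ.add_mem ?_ (W₁.sub_starProjection_mem_orthogonal _)
    rw [hW₁]
    apply Matrix.toLp_mem_orthogonal_span_cols
    rw [Matrix.mulVec_mulVec, Matrix.transpose_mul_sub_eq_zero_of_transpose_mul_eq hH₁ hV hSVD,
      Matrix.zero_mulVec]
  exact ⟨hmem, fun z hz => norm_sub_le_norm_sub_of_mem_vadd_of_sub_mem_orthogonal hmem horth hz⟩

/-- Similarity-based learning via projection: if the guest trajectory is
`w_g = (H₂V)·ḡ + w₂_off`, then `w_h = (H₁UD)·ḡ + P_{W₁}(w₂_off − w₁_off) + w₁_off`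
belongs to the host admissible behavior `B₁ = w₁_off + W₁` and minimizes the
distance to `w_g` over `B₁`. -/
theorem similarity_based_learning (n k : ℕ)
    (H₁ H₂ : Matrix (Fin n) (Fin k) ℝ)
    (hH₁ : H₁ᵀ * H₁ = 1) (hH₂ : H₂ᵀ * H₂ = 1)
    (U D V : Matrix (Fin k) (Fin k) ℝ)
    (hU : Uᵀ * U = 1) (hV : Vᵀ * V = 1)
    (hSVD : H₁ᵀ * H₂ = U * D * Vᵀ)
    (W₁ : Submodule ℝ (EuclideanSpace ℝ (Fin n)))
    (hW₁ : W₁ = Submodule.span ℝ (Set.range fun j : Fin k =>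
      (WithLp.toLp 2 (fun i : Fin n => H₁ i j) : EuclideanSpace ℝ (Fin n))))
    (w₁off w₂off : EuclideanSpace ℝ (Fin n)) (gbar : Fin k → ℝ)
    (w_g w_h : EuclideanSpace ℝ (Fin n))
    (hwg : w_g = (show EuclideanSpace ℝ (Fin n) from WithLp.toLp 2 ((H₂ * V).mulVec gbar)) + w₂off)
    (hwh : w_h = (show EuclideanSpace ℝ (Fin n) from WithLp.toLp 2 ((H₁ * U * D).mulVec gbar)) +
      (Submodule.orthogonalProjectionOnto W₁ (w₂off - w₁off) : EuclideanSpace ℝ (Fin n)) + w₁off) :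
    w_h ∈ (w₁off +ᵥ (W₁ : Set (EuclideanSpace ℝ (Fin n)))) ∧
      ∀ z ∈ w₁off +ᵥ (W₁ : Set (EuclideanSpace ℝ (Fin n))),
        ‖w_g - w_h‖ ≤ ‖w_g - z‖ :=
  similarity_based_learning_general n k H₁ H₂ hH₁ U D V hV hSVD W₁ hW₁ w₁off w₂off gbar w_g w_h hwg
    hwh
end

section
/- Let n, k be natural numbers and let H₁, H₂ be real n×k matrices with orthonormal columns (H₁ᵀH₁ = I_k and H₂ᵀH₂ = I_k). Suppose all singular values of H₁ᵀH₂ equal 1, i.e., (H₁ᵀH₂)ᵀ(H₁ᵀH₂) = I_k. Then the subspaces of ℝ^n spanned by the columns of H₁ and of H₂ coincide: W₁ = W₂. Moreover, for any offsets w₁_off, w₂_off ∈ ℝ^n, if the affine sets w₁_off + W₁ and w₂_off + W₂ have nonempty intersection, then they are equal. That is, similar admissible behaviors whose similarity indexes are all equal to 1 are identical. -/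
open Matrix Pointwise

/-!
Since `Aᵀ * A = 1`, `A * Aᵀ` is the orthogonal projection onto the column span of `A`, and the
Gram matrix of the residual `B - A * (Aᵀ * B)` is `Bᵀ * B - (Aᵀ * B)ᵀ * (Aᵀ * B) = 0`. Hence
`B = A * (Aᵀ * B)`, so the columns of `B` lie in the span of those of `A`. The square matrix
`Aᵀ * B` is orthogonal, so the hypotheses are symmetric in `A` and `B` and the spans agree.
Two cosets of the same subspace that meet are equal.
-/

theorem leftAddCoset_eq_of_inter_nonempty {α : Type*} [AddGroup α] (s : AddSubgroup α)
    {a b : α} (h : ((a +ᵥ (s : Set α)) ∩ (b +ᵥ (s : Set α))).Nonempty) :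
    a +ᵥ (s : Set α) = b +ᵥ (s : Set α) := by
  obtain ⟨x, hxa, hxb⟩ := h
  rw [mem_leftAddCoset_iff] at hxa hxb
  rw [leftAddCoset_eq_iff]
  simpa [add_assoc] using s.add_mem hxa (s.neg_mem hxb)

namespace Matrix

theorem span_range_col_mul_le {l m n R : Type*} [Fintype m] [CommRing R]
    (A : Matrix l m R) (B : Matrix m n R) :
    Submodule.span R (Set.range (A * B).col) ≤ Submodule.span R (Set.range A.col) := by
  rw [Submodule.span_le, ← range_mulVecLin]
  rintro _ ⟨j, rfl⟩
  exact ⟨B.col j, rfl⟩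

theorem eq_mul_transpose_mul_of_transpose_mul_orthogonal {m n : Type*} [Fintype m] [Fintype n]
    [DecidableEq n] {A B : Matrix m n ℝ}
    (hA : Aᵀ * A = 1) (hB : Bᵀ * B = 1) (hAB : (Aᵀ * B)ᵀ * (Aᵀ * B) = 1) :
    B = A * (Aᵀ * B) := by
  have hD : (B - A * (Aᵀ * B))ᴴ * (B - A * (Aᵀ * B)) = 0 := by
    rw [conjTranspose_eq_transpose_of_trivial]
    calc (B - A * (Aᵀ * B))ᵀ * (B - A * (Aᵀ * B))
        = Bᵀ * B - (Aᵀ * B)ᵀ * (Aᵀ * B) - (Aᵀ * B)ᵀ * (Aᵀ * B)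
          + (Aᵀ * B)ᵀ * (Aᵀ * A) * (Aᵀ * B) := by
          simp only [transpose_sub, transpose_mul, transpose_transpose, Matrix.sub_mul,
            Matrix.mul_sub, Matrix.mul_assoc]
          abel
      _ = 0 := by rw [hA, Matrix.mul_one, hAB, hB]; abel
  exact sub_eq_zero.mp (conjTranspose_mul_self_eq_zero.mp hD)

theorem span_range_col_eq_of_transpose_mul_orthogonal {m n : Type*} [Fintype m] [Fintype n]
    [DecidableEq n] {A B : Matrix m n ℝ}
    (hA : Aᵀ * A = 1) (hB : Bᵀ * B = 1) (hAB : (Aᵀ * B)ᵀ * (Aᵀ * B) = 1) :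
    Submodule.span ℝ (Set.range A.col) = Submodule.span ℝ (Set.range B.col) := by
  have hBA : (Bᵀ * A)ᵀ * (Bᵀ * A) = 1 := by
    have hC : Bᵀ * A = (Aᵀ * B)ᵀ := by rw [transpose_mul, transpose_transpose]
    rw [hC, transpose_transpose]
    exact mul_eq_one_comm.mp hAB
  apply le_antisymm
  · conv_lhs => rw [eq_mul_transpose_mul_of_transpose_mul_orthogonal hB hA hBA]
    exact span_range_col_mul_le _ _
  · conv_lhs => rw [eq_mul_transpose_mul_of_transpose_mul_orthogonal hA hB hAB]
    exact span_range_col_mul_le _ _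

end Matrix

/-- If all similarity indexes (singular values of `H₁ᵀH₂`) between two admissible
behaviors equal `1`, then the column spans of `H₁` and `H₂` coincide, and any two
similar (intersecting) affine translates of them are identical. -/
theorem similarity_indexes_one_imp_identical (n k : ℕ)
    (H₁ H₂ : Matrix (Fin n) (Fin k) ℝ)
    (hH₁ : H₁ᵀ * H₁ = 1) (hH₂ : H₂ᵀ * H₂ = 1)
    (hSI : (H₁ᵀ * H₂)ᵀ * (H₁ᵀ * H₂) = 1)
    (W₁ W₂ : Submodule ℝ (Fin n → ℝ))
    (hW₁ : W₁ = Submodule.span ℝ (Set.range fun j : Fin k => fun i : Fin n => H₁ i j))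
    (hW₂ : W₂ = Submodule.span ℝ (Set.range fun j : Fin k => fun i : Fin n => H₂ i j)) :
    W₁ = W₂ ∧
      ∀ w₁off w₂off : Fin n → ℝ,
        ((w₁off +ᵥ (W₁ : Set (Fin n → ℝ))) ∩ (w₂off +ᵥ (W₂ : Set (Fin n → ℝ)))).Nonempty →
          w₁off +ᵥ (W₁ : Set (Fin n → ℝ)) = w₂off +ᵥ (W₂ : Set (Fin n → ℝ)) := by
  have hW : W₁ = W₂ := by
    rw [hW₁, hW₂]
    exact span_range_col_eq_of_transpose_mul_orthogonal hH₁ hH₂ hSI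
  refine ⟨hW, fun w₁off w₂off hne => ?_⟩
  subst hW
  exact leftAddCoset_eq_of_inter_nonempty W₁.toAddSubgroup hne
end
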